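/- arXiv:2402.14727 — 2 statements merged into one kernel-verified Lean document; each statement's English description precedes it below -/
import Mathlib

section
/- Let u, v, θ : ℝ → ℝ be smooth functions satisfying u'(s) = cos θ(s), v'(s) = sin θ(s), and cos u(s) ≠ 0 for all s. Define Ψ(s,φ) = (cos u(s) cos φ, cos u(s) sin φ, sin u(s), v(s)) and N(s,φ) = (sin θ(s) sin u(s) cos φ, sin θ(s) sin u(s) sin φ, −sin θ(s) cos u(s), cos θ(s)). Then the mean curvature H(s,φ) = (g₂₂b₁₁ − 2g₁₂b₁₂ + g₁₁b₂₂)/(g₁₁g₂₂ − g₁₂²) satisfies H(s,φ) = θ'(s) − sin θ(s) · tan u(s) for all (s,φ). -/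
open Real

noncomputable def ip4 (a b : Fin 4 → ℝ) : ℝ :=
  a 0 * b 0 + a 1 * b 1 + a 2 * b 2 + a 3 * b 3

noncomputable def meanCurv (Ψ N : ℝ → ℝ → Fin 4 → ℝ) (s φ : ℝ) : ℝ :=
  let Ψs := deriv (fun s' => Ψ s' φ) s
  let Ψφ := deriv (fun φ' => Ψ s φ') φ
  let Ns := deriv (fun s' => N s' φ) s
  let Nφ := deriv (fun φ' => N s φ') φ
  let g11 := ip4 Ψs Ψs
  let g12 := ip4 Ψs Ψφ
  let g22 := ip4 Ψφ Ψφ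
  let b11 := -ip4 Ns Ψs
  let b12 := -ip4 Ns Ψφ
  let b22 := -ip4 Nφ Ψφ
  (g22 * b11 - 2 * g12 * b12 + g11 * b22) / (g11 * g22 - g12 ^ 2)

lemma hasDerivAt_vec4 {f1 f2 f3 f4 : ℝ → ℝ} {d1 d2 d3 d4 x : ℝ}
    (h1 : HasDerivAt f1 d1 x) (h2 : HasDerivAt f2 d2 x)
    (h3 : HasDerivAt f3 d3 x) (h4 : HasDerivAt f4 d4 x) :
    HasDerivAt (fun t => (![f1 t, f2 t, f3 t, f4 t] : Fin 4 → ℝ)) ![d1, d2, d3, d4] x := by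
  rw [hasDerivAt_pi]
  intro i
  fin_cases i <;> simpa

/-- The mean curvature of the rotational surface `Ψ(s,φ) = (cos u cos φ, cos u sin φ, sin u, v)`
in `𝕊²×ℝ ⊂ ℝ⁴`, with respect to the unit normal `N` below, equals `H = θ' − sin θ · tan u`. -/
theorem rotational_surface_mean_curvature (u v θ : ℝ → ℝ)
    (hu : ContDiff ℝ (⊤ : ℕ∞) u) (hv : ContDiff ℝ (⊤ : ℕ∞) v) (hθ : ContDiff ℝ (⊤ : ℕ∞) θ)
    (hu' : ∀ s, deriv u s = cos (θ s))
    (hv' : ∀ s, deriv v s = sin (θ s))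
    (hreg : ∀ s, cos (u s) ≠ 0)
    (Ψ N : ℝ → ℝ → Fin 4 → ℝ)
    (hΨ : ∀ s φ, Ψ s φ =
      ![cos (u s) * cos φ, cos (u s) * sin φ, sin (u s), v s])
    (hN : ∀ s φ, N s φ =
      ![sin (θ s) * sin (u s) * cos φ, sin (θ s) * sin (u s) * sin φ,
        -(sin (θ s) * cos (u s)), cos (θ s)]) :
    ∀ s φ : ℝ,
      meanCurv Ψ N s φ = deriv θ s - sin (θ s) * tan (u s) := by
  intro s φ
  set d := deriv θ s with hd
  have hθd : HasDerivAt θ d s := (hθ.differentiable (by simp) s).hasDerivAt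
  have hud : HasDerivAt u (cos (θ s)) s := by
    have := (hu.differentiable (by simp) s).hasDerivAt
    rwa [hu' s] at this
  have hvd : HasDerivAt v (sin (θ s)) s := by
    have := (hv.differentiable (by simp) s).hasDerivAt
    rwa [hv' s] at this
  -- component derivative building blocks (in s)
  have hcu : HasDerivAt (fun t => cos (u t)) (-sin (u s) * cos (θ s)) s :=
    (Real.hasDerivAt_cos (u s)).comp s hud
  have hsu : HasDerivAt (fun t => sin (u t)) (cos (u s) * cos (θ s)) s :=
    (Real.hasDerivAt_sin (u s)).comp s hud
  have hcθ : HasDerivAt (fun t => cos (θ t)) (-sin (θ s) * d) s :=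
    (Real.hasDerivAt_cos (θ s)).comp s hθd
  have hsθ : HasDerivAt (fun t => sin (θ t)) (cos (θ s) * d) s :=
    (Real.hasDerivAt_sin (θ s)).comp s hθd
  -- Ψs
  have hΨs : deriv (fun s' => Ψ s' φ) s =
      ![-sin (u s) * cos (θ s) * cos φ, -sin (u s) * cos (θ s) * sin φ,
        cos (u s) * cos (θ s), sin (θ s)] := by
    have : deriv (fun s' => Ψ s' φ) s = deriv (fun s' =>
        (![cos (u s') * cos φ, cos (u s') * sin φ, sin (u s'), v s'] : Fin 4 → ℝ)) s := by
      congr 1; funext s'; rw [hΨ]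
    rw [this]
    exact (hasDerivAt_vec4 (hcu.mul_const _) (hcu.mul_const _) hsu hvd).deriv
  -- Ψφ
  have hΨφ : deriv (fun φ' => Ψ s φ') φ =
      ![cos (u s) * (-sin φ), cos (u s) * cos φ, 0, 0] := by
    have : deriv (fun φ' => Ψ s φ') φ = deriv (fun φ' =>
        (![cos (u s) * cos φ', cos (u s) * sin φ', sin (u s), v s] : Fin 4 → ℝ)) φ := by
      congr 1; funext φ'; rw [hΨ]
    rw [this]
    exact (hasDerivAt_vec4 ((Real.hasDerivAt_cos φ).const_mul _)
      ((Real.hasDerivAt_sin φ).const_mul _) (hasDerivAt_const _ _)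
      (hasDerivAt_const _ _)).deriv
  -- Ns
  have hNs : deriv (fun s' => N s' φ) s =
      ![(cos (θ s) * d * sin (u s) + sin (θ s) * (cos (u s) * cos (θ s))) * cos φ,
        (cos (θ s) * d * sin (u s) + sin (θ s) * (cos (u s) * cos (θ s))) * sin φ,
        -(cos (θ s) * d * cos (u s) + sin (θ s) * (-sin (u s) * cos (θ s))),
        -sin (θ s) * d] := by
    have : deriv (fun s' => N s' φ) s = deriv (fun s' =>
        (![sin (θ s') * sin (u s') * cos φ, sin (θ s') * sin (u s') * sin φ,
          -(sin (θ s') * cos (u s')), cos (θ s')] : Fin 4 → ℝ)) s := by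
      congr 1; funext s'; rw [hN]
    rw [this]
    exact (hasDerivAt_vec4 (((hsθ.mul hsu).mul_const _))
      (((hsθ.mul hsu).mul_const _)) ((hsθ.mul hcu).neg) hcθ).deriv
  -- Nφ
  have hNφ : deriv (fun φ' => N s φ') φ =
      ![sin (θ s) * sin (u s) * (-sin φ), sin (θ s) * sin (u s) * cos φ, 0, 0] := by
    have : deriv (fun φ' => N s φ') φ = deriv (fun φ' =>
        (![sin (θ s) * sin (u s) * cos φ', sin (θ s) * sin (u s) * sin φ',
          -(sin (θ s) * cos (u s)), cos (θ s)] : Fin 4 → ℝ)) φ := by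
      congr 1; funext φ'; rw [hN]
    rw [this]
    exact (hasDerivAt_vec4 ((Real.hasDerivAt_cos φ).const_mul _)
      ((Real.hasDerivAt_sin φ).const_mul _) (hasDerivAt_const _ _)
      (hasDerivAt_const _ _)).deriv
  simp only [meanCurv, hΨs, hΨφ, hNs, hNφ, ip4, Matrix.cons_val_zero, Matrix.cons_val_one,
    Matrix.head_cons, Matrix.cons_val_two, Matrix.tail_cons, Matrix.cons_val_three]
  have p1 : sin (θ s) ^ 2 + cos (θ s) ^ 2 = 1 := sin_sq_add_cos_sq _
  have p2 : sin (u s) ^ 2 + cos (u s) ^ 2 = 1 := sin_sq_add_cos_sq _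
  have p3 : sin φ ^ 2 + cos φ ^ 2 = 1 := sin_sq_add_cos_sq _
  rw [tan_eq_sin_div_cos]
  rw [← mul_div_assoc, sub_div' (hreg s)]
  refine (div_eq_div_iff ?_ (hreg s)).mpr ?_
  · intro h
    apply hreg s
    have hb2 : cos (u s) ^ 2 = 0 := by
      linear_combination h
        - (cos (u s)^2 + sin (u s)^2 * cos (u s)^2 * cos (θ s)^2 * (sin φ^2 + cos φ^2)) * p3
        - (cos (u s)^2 * cos (θ s)^2 * (sin φ^2 + cos φ^2)) * p2
        - (cos (u s)^2 * (sin φ^2 + cos φ^2)) * p1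
    exact pow_eq_zero_iff two_ne_zero |>.mp hb2
  · field_simp
    linear_combination
      (sin (θ s) * sin (u s) * cos (u s)^4 * cos (θ s)^2 * (sin φ^2 + cos φ^2)) * p3
end

section
/- Let u, v, θ : ℝ → ℝ be smooth functions satisfying u'(s) = cos θ(s), v'(s) = sin θ(s), and cos u(s) ≠ 0 for all s, and let Ψ(s,φ) = (cos u(s) cos φ, cos u(s) sin φ, sin u(s), v(s)) with unit normal N(s,φ) = (sin θ(s) sin u(s) cos φ, sin θ(s) sin u(s) sin φ, −sin θ(s) cos u(s), cos θ(s)) and mean curvature H defined via the fundamental forms. Then the soliton equation H(s,φ) = ⟨N(s,φ), (0,0,0,1)⟩ holds for all (s,φ) if and only if θ'(s) = sin θ(s) · tan u(s) + cos θ(s) for all s. -/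
open Real

theorem key (u v θ : ℝ → ℝ)
    (hu : ContDiff ℝ (⊤ : ℕ∞) u) (hv : ContDiff ℝ (⊤ : ℕ∞) v) (hθ : ContDiff ℝ (⊤ : ℕ∞) θ)
    (hu' : ∀ s, deriv u s = cos (θ s))
    (hv' : ∀ s, deriv v s = sin (θ s))
    (hreg : ∀ s, cos (u s) ≠ 0)
    (Ψ N : ℝ → ℝ → Fin 4 → ℝ)
    (hΨ : ∀ s φ, Ψ s φ =
      ![cos (u s) * cos φ, cos (u s) * sin φ, sin (u s), v s])
    (hN : ∀ s φ, N s φ =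
      ![sin (θ s) * sin (u s) * cos φ, sin (θ s) * sin (u s) * sin φ,
        -(sin (θ s) * cos (u s)), cos (θ s)])
    (s φ : ℝ) :
    meanCurv Ψ N s φ = deriv θ s - sin (θ s) * tan (u s) := by
  have hud : HasDerivAt u (cos (θ s)) s := by
    have h := (hu.differentiable (by simp) s).hasDerivAt
    rwa [hu' s] at h
  have hvd : HasDerivAt v (sin (θ s)) s := by
    have h := (hv.differentiable (by simp) s).hasDerivAt
    rwa [hv' s] at h
  have hθd : HasDerivAt θ (deriv θ s) s := (hθ.differentiable (by simp) s).hasDerivAt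
  have hΨs : HasDerivAt (fun s' => Ψ s' φ)
      ![-sin (u s) * cos (θ s) * cos φ, -sin (u s) * cos (θ s) * sin φ,
        cos (u s) * cos (θ s), sin (θ s)] s := by
    rw [hasDerivAt_pi]
    intro i
    fin_cases i <;>
      simp only [hΨ, Matrix.cons_val_zero, Matrix.cons_val_one, Matrix.head_cons,
        Matrix.cons_val_two, Matrix.tail_cons, Matrix.cons_val_three, Fin.isValue,
        Matrix.cons_val', Matrix.empty_val', Matrix.cons_val_fin_one, Matrix.head_fin_const]
    · exact hud.cos.mul_const _
    · exact hud.cos.mul_const _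
    · exact hud.sin
    · exact hvd
  have hΨφ : HasDerivAt (fun φ' => Ψ s φ')
      ![cos (u s) * -sin φ, cos (u s) * cos φ, 0, 0] φ := by
    rw [hasDerivAt_pi]
    intro i
    fin_cases i <;>
      simp only [hΨ, Matrix.cons_val_zero, Matrix.cons_val_one, Matrix.head_cons,
        Matrix.cons_val_two, Matrix.tail_cons, Matrix.cons_val_three, Fin.isValue,
        Matrix.cons_val', Matrix.empty_val', Matrix.cons_val_fin_one, Matrix.head_fin_const]
    · exact (Real.hasDerivAt_cos φ).const_mul _
    · exact (Real.hasDerivAt_sin φ).const_mul _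
    · exact hasDerivAt_const _ _
    · exact hasDerivAt_const _ _
  have hNs : HasDerivAt (fun s' => N s' φ)
      ![(cos (θ s) * deriv θ s * sin (u s) + sin (θ s) * (cos (u s) * cos (θ s))) * cos φ,
        (cos (θ s) * deriv θ s * sin (u s) + sin (θ s) * (cos (u s) * cos (θ s))) * sin φ,
        -(cos (θ s) * deriv θ s * cos (u s) + sin (θ s) * (-sin (u s) * cos (θ s))),
        -sin (θ s) * deriv θ s] s := by
    rw [hasDerivAt_pi]
    intro i
    fin_cases i <;>
      simp only [hN, Matrix.cons_val_zero, Matrix.cons_val_one, Matrix.head_cons,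
        Matrix.cons_val_two, Matrix.tail_cons, Matrix.cons_val_three, Fin.isValue,
        Matrix.cons_val', Matrix.empty_val', Matrix.cons_val_fin_one, Matrix.head_fin_const]
    · exact (hθd.sin.mul hud.sin).mul_const _
    · exact (hθd.sin.mul hud.sin).mul_const _
    · exact (hθd.sin.mul hud.cos).neg
    · exact hθd.cos
  have hNφ : HasDerivAt (fun φ' => N s φ')
      ![sin (θ s) * sin (u s) * -sin φ, sin (θ s) * sin (u s) * cos φ, 0, 0] φ := by
    rw [hasDerivAt_pi]
    intro i
    fin_cases i <;>
      simp only [hN, Matrix.cons_val_zero, Matrix.cons_val_one, Matrix.head_cons,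
        Matrix.cons_val_two, Matrix.tail_cons, Matrix.cons_val_three, Fin.isValue,
        Matrix.cons_val', Matrix.empty_val', Matrix.cons_val_fin_one, Matrix.head_fin_const]
    · exact (Real.hasDerivAt_cos φ).const_mul _
    · exact (Real.hasDerivAt_sin φ).const_mul _
    · exact hasDerivAt_const _ _
    · exact hasDerivAt_const _ _
  have pθ := sin_sq_add_cos_sq (θ s)
  have pu := sin_sq_add_cos_sq (u s)
  have pφ := sin_sq_add_cos_sq φ
  set Psv : Fin 4 → ℝ := ![-sin (u s) * cos (θ s) * cos φ, -sin (u s) * cos (θ s) * sin φ,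
      cos (u s) * cos (θ s), sin (θ s)] with hPsv
  set Pfv : Fin 4 → ℝ := ![cos (u s) * -sin φ, cos (u s) * cos φ, 0, 0] with hPfv
  set Nsv : Fin 4 → ℝ :=
    ![(cos (θ s) * deriv θ s * sin (u s) + sin (θ s) * (cos (u s) * cos (θ s))) * cos φ,
      (cos (θ s) * deriv θ s * sin (u s) + sin (θ s) * (cos (u s) * cos (θ s))) * sin φ,
      -(cos (θ s) * deriv θ s * cos (u s) + sin (θ s) * (-sin (u s) * cos (θ s))),
      -sin (θ s) * deriv θ s] with hNsv
  set Nfv : Fin 4 → ℝ := ![sin (θ s) * sin (u s) * -sin φ, sin (θ s) * sin (u s) * cos φ, 0, 0]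
    with hNfv
  have hg11 : ip4 Psv Psv = 1 := by
    simp only [ip4, hPsv, Matrix.cons_val_zero, Matrix.cons_val_one, Matrix.head_cons,
      Matrix.cons_val_two, Matrix.tail_cons, Matrix.cons_val_three]
    linear_combination (sin (u s) ^ 2 * cos (θ s) ^ 2) * pφ + cos (θ s) ^ 2 * pu + pθ
  have hg12 : ip4 Psv Pfv = 0 := by
    simp only [ip4, hPsv, hPfv, Matrix.cons_val_zero, Matrix.cons_val_one, Matrix.head_cons,
      Matrix.cons_val_two, Matrix.tail_cons, Matrix.cons_val_three]
    ring
  have hg22 : ip4 Pfv Pfv = cos (u s) ^ 2 := by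
    simp only [ip4, hPfv, Matrix.cons_val_zero, Matrix.cons_val_one, Matrix.head_cons,
      Matrix.cons_val_two, Matrix.tail_cons, Matrix.cons_val_three]
    linear_combination cos (u s) ^ 2 * pφ
  have hb11 : ip4 Nsv Psv = -deriv θ s := by
    simp only [ip4, hNsv, hPsv, Matrix.cons_val_zero, Matrix.cons_val_one, Matrix.head_cons,
      Matrix.cons_val_two, Matrix.tail_cons, Matrix.cons_val_three]
    linear_combination
      (-((cos (θ s) * deriv θ s * sin (u s) + sin (θ s) * (cos (u s) * cos (θ s))) *
          sin (u s) * cos (θ s))) * pφ +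
        (-(deriv θ s) * cos (θ s) ^ 2) * pu + (-(deriv θ s)) * pθ
  have hb12 : ip4 Nsv Pfv = 0 := by
    simp only [ip4, hNsv, hPfv, Matrix.cons_val_zero, Matrix.cons_val_one, Matrix.head_cons,
      Matrix.cons_val_two, Matrix.tail_cons, Matrix.cons_val_three]
    ring
  have hb22 : ip4 Nfv Pfv = sin (θ s) * sin (u s) * cos (u s) := by
    simp only [ip4, hNfv, hPfv, Matrix.cons_val_zero, Matrix.cons_val_one, Matrix.head_cons,
      Matrix.cons_val_two, Matrix.tail_cons, Matrix.cons_val_three]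
    linear_combination (sin (θ s) * sin (u s) * cos (u s)) * pφ
  simp only [meanCurv, hΨs.deriv, hΨφ.deriv, hNs.deriv, hNφ.deriv, ← hPsv, ← hPfv, ← hNsv,
    ← hNfv, hg11, hg12, hg22, hb11, hb12, hb22]
  rw [tan_eq_sin_div_cos]
  field_simp [hreg s]
  ring

/-- A rotational surface `Ψ(s,φ) = (cos u cos φ, cos u sin φ, sin u, v)` in `𝕊²×ℝ ⊂ ℝ⁴`
is a `V`-soliton (`H = ⟨N, V⟩` with `V = ∂ₜ = (0,0,0,1)`) if and only if its generating
curve satisfies `θ' = sin θ · tan u + cos θ`. -/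
theorem rotational_V_soliton_iff (u v θ : ℝ → ℝ)
    (hu : ContDiff ℝ (⊤ : ℕ∞) u) (hv : ContDiff ℝ (⊤ : ℕ∞) v) (hθ : ContDiff ℝ (⊤ : ℕ∞) θ)
    (hu' : ∀ s, deriv u s = cos (θ s))
    (hv' : ∀ s, deriv v s = sin (θ s))
    (hreg : ∀ s, cos (u s) ≠ 0)
    (Ψ N : ℝ → ℝ → Fin 4 → ℝ)
    (hΨ : ∀ s φ, Ψ s φ =
      ![cos (u s) * cos φ, cos (u s) * sin φ, sin (u s), v s])
    (hN : ∀ s φ, N s φ =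
      ![sin (θ s) * sin (u s) * cos φ, sin (θ s) * sin (u s) * sin φ,
        -(sin (θ s) * cos (u s)), cos (θ s)]) :
    (∀ s φ : ℝ, meanCurv Ψ N s φ = ip4 (N s φ) ![0, 0, 0, 1]) ↔
      (∀ s : ℝ, deriv θ s = sin (θ s) * tan (u s) + cos (θ s)) := by
  have hk := key u v θ hu hv hθ hu' hv' hreg Ψ N hΨ hN
  have hip : ∀ s φ : ℝ, ip4 (N s φ) ![0, 0, 0, 1] = cos (θ s) := by
    intro s φ
    simp [ip4, hN]
  constructor
  · intro h s
    have h0 := h s 0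
    rw [hk s 0, hip s 0] at h0
    linarith
  · intro h s φ
    rw [hk s φ, hip s φ, h s]
    ring
end
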